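/- For every v, x, w ∈ ℝ^d and y ∈ {−1, +1}, the logistic loss satisfies f_LL(w,(x,y)) ≤ f_LL(v,(x,y)) + ⟨∇f_LL(v,(x,y)), w − v⟩ + (1/2)⟨H_qu(v,(x,y))(w − v), w − v⟩, where H_qu(v,(x,y)) = (tanh(⟨x,v⟩/2)/(2⟨x,v⟩)) · xxᵀ when ⟨x,v⟩ ≠ 0 and H_qu(v,(x,y)) = (1/4) xxᵀ when ⟨x,v⟩ = 0. -/

import Mathlib

/-!
Since `log (1 + exp (-s)) = log 2 - s / 2 + log (cosh (s / 2))`, the loss along `x` is an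
affine function of the margin `s` plus `log (cosh (s / 2))`. The latter is concave as a function
of `s ^ 2`, because its derivative in `s ^ 2` is `tanh t / (2 t)` with `t = s / 2`, and
`tanh t / t` decreases on `t > 0`. Its tangent line in the variable `s ^ 2` gives exactly the
`H_qu` bound.
-/

open Matrix

/-- The quadratic-upper-bound second-order-information matrix for the logistic loss:
`H_qu(v,(x,y)) = (tanh(⟨x,v⟩/2)/(2⟨x,v⟩)) xxᵀ` when `⟨x,v⟩ ≠ 0`, and `(1/4) xxᵀ`
when `⟨x,v⟩ = 0`. -/
noncomputable def Hqu {d : ℕ} (v x : Fin d → ℝ) : Matrix (Fin d) (Fin d) ℝ :=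
  (if (x ⬝ᵥ v : ℝ) = 0 then (1 : ℝ) / 4
    else Real.tanh ((x ⬝ᵥ v) / 2) / (2 * (x ⬝ᵥ v))) • Matrix.vecMulVec x x

open Real Set

namespace Real

lemma sinh_le_mul_cosh {t : ℝ} (ht : 0 ≤ t) : sinh t ≤ t * cosh t := by
  rcases ht.eq_or_lt with rfl | ht
  · simp
  obtain ⟨c, ⟨hc0, hct⟩, hc⟩ := exists_hasDerivAt_eq_slope sinh cosh ht
    continuous_sinh.continuousOn fun s _ => hasDerivAt_sinh s
  rw [sinh_zero, sub_zero, sub_zero, eq_div_iff ht.ne'] at hc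
  have hcosh : cosh c ≤ cosh t :=
    cosh_le_cosh.2 (by rw [abs_of_pos hc0, abs_of_pos ht]; exact hct.le)
  nlinarith

lemma antitoneOn_tanh_div_self : AntitoneOn (fun t => tanh t / t) (Ioi 0) := by
  intro r (hr : 0 < r) u (hu : 0 < u) hru
  simp only
  rw [div_le_div_iff₀ hu hr, tanh_eq_sinh_div_cosh, tanh_eq_sinh_div_cosh, div_mul_eq_mul_div,
    div_mul_eq_mul_div, div_le_div_iff₀ (cosh_pos u) (cosh_pos r)]
  have hd : 0 ≤ u - r := sub_nonneg.2 hru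
  have h1 : r * sinh (u - r) ≤ r * ((u - r) * cosh (u - r)) :=
    mul_le_mul_of_nonneg_left (sinh_le_mul_cosh hd) hr.le
  have h2 : r * (u - r) * cosh (u - r) ≤ r * (u - r) * cosh u :=
    mul_le_mul_of_nonneg_left
      (cosh_le_cosh.2 (by rw [abs_of_nonneg hd, abs_of_pos hu]; linarith))
      (mul_nonneg hr.le hd)
  have h3 : 0 ≤ (u - r) * cosh u * (sinh r - r) :=
    mul_nonneg (mul_nonneg hd (cosh_pos u).le) (sub_nonneg.2 (self_le_sinh_iff.2 hr.le))
  rw [sinh_sub] at h1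
  nlinarith

end Real

lemma le_of_hasDerivAt_nonpos_of_nonneg {f f' : ℝ → ℝ} {a r u : ℝ}
    (hf : ∀ t, HasDerivAt f (f' t) t) (hleft : ∀ t ∈ Ioo a r, f' t ≤ 0)
    (hright : ∀ t ∈ Ioi r, 0 ≤ f' t) (har : a ≤ r) (hau : a ≤ u) : f r ≤ f u := by
  have hcont : Continuous f := continuous_iff_continuousAt.2 fun t => (hf t).continuousAt
  rcases le_total r u with hru | hur
  · refine monotoneOn_of_hasDerivWithinAt_nonneg (convex_Ici r) hcont.continuousOn
      (fun t _ => (hf t).hasDerivWithinAt) (fun t ht => hright t ?_) (le_refl r) hru hru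
    rwa [interior_Ici] at ht
  · refine antitoneOn_of_hasDerivWithinAt_nonpos (convex_Icc a r) hcont.continuousOn
      (fun t _ => (hf t).hasDerivWithinAt) (fun t ht => hleft t ?_)
      ⟨hau, hur⟩ ⟨har, le_rfl⟩ hur
    rwa [interior_Icc] at ht

lemma log_cosh_le_of_pos {r u : ℝ} (hr : 0 < r) (hu : 0 ≤ u) :
    log (cosh u) ≤ log (cosh r) + tanh r / (2 * r) * (u ^ 2 - r ^ 2) := by
  set c := tanh r / (2 * r)
  have hderiv (t : ℝ) :
      HasDerivAt (fun t => c * t ^ 2 - log (cosh t)) (c * (2 * t) - tanh t) t := by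
    refine (((hasDerivAt_pow 2 t).const_mul c).sub
      ((hasDerivAt_cosh t).log (cosh_pos t).ne')).congr_deriv ?_
    rw [tanh_eq_sinh_div_cosh]
    norm_num
  have hslope {t : ℝ} (ht : 0 < t) : c * (2 * t) - tanh t = t * (tanh r / r - tanh t / t) := by
    simp only [c]
    field_simp
  have hmin := le_of_hasDerivAt_nonpos_of_nonneg hderiv
    (fun t ⟨ht, htr⟩ => by
      rw [hslope ht]
      exact mul_nonpos_of_nonneg_of_nonpos ht.le
        (sub_nonpos.2 (antitoneOn_tanh_div_self ht hr htr.le)))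
    (fun t (hrt : r < t) => by
      rw [hslope (hr.trans hrt)]
      exact mul_nonneg (hr.trans hrt).le
        (sub_nonneg.2 (antitoneOn_tanh_div_self hr (hr.trans hrt) hrt.le)))
    hr.le hu
  linarith

/-- The derivative of `z ↦ log (cosh √z)` at `z = r ^ 2`. -/
noncomputable def logCoshSlope (r : ℝ) : ℝ := if r = 0 then 1 / 2 else tanh r / (2 * r)

lemma logCoshSlope_neg (r : ℝ) : logCoshSlope (-r) = logCoshSlope r := by
  simp [logCoshSlope, tanh_neg, neg_div_neg_eq]

lemma logCoshSlope_abs (r : ℝ) : logCoshSlope |r| = logCoshSlope r := by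
  rcases abs_choice r with h | h <;> rw [h]
  exact logCoshSlope_neg r

lemma logCoshSlope_mul (r : ℝ) : logCoshSlope r * (2 * r) = tanh r := by
  rcases eq_or_ne r 0 with rfl | hr
  · simp
  · rw [logCoshSlope, if_neg hr]
    field_simp

lemma log_cosh_le (r u : ℝ) :
    log (cosh u) ≤ log (cosh r) + logCoshSlope r * (u ^ 2 - r ^ 2) := by
  rcases eq_or_ne r 0 with rfl | hr
  · simpa [logCoshSlope, div_eq_inv_mul] using
      (log_le_log (cosh_pos u) (cosh_le_exp_half_sq u)).trans_eq (log_exp _)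
  · have h := log_cosh_le_of_pos (abs_pos.2 hr) (abs_nonneg u)
    rw [cosh_abs, cosh_abs, sq_abs, sq_abs] at h
    rwa [← logCoshSlope_abs, logCoshSlope, if_neg (abs_ne_zero.2 hr)]

lemma log_one_add_exp_neg (s : ℝ) :
    log (1 + exp (-s)) = log 2 - s / 2 + log (cosh (s / 2)) := by
  have h : 1 + exp (-s) = exp (-(s / 2)) * (2 * cosh (s / 2)) := by
    rw [cosh_eq, mul_div_cancel₀ _ two_ne_zero, mul_add, ← exp_add, ← exp_add,
      show -(s / 2) + s / 2 = 0 by ring, show -(s / 2) + -(s / 2) = -s by ring, exp_zero, add_comm]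
  rw [h, log_mul (exp_ne_zero _) (by positivity), log_exp, log_mul two_ne_zero (cosh_pos _).ne']
  ring

lemma one_div_one_add_exp (s : ℝ) : 1 / (1 + exp s) = (1 - tanh (s / 2)) / 2 := by
  have h : exp s = exp (s / 2) ^ 2 := by rw [← exp_nat_mul]; ring_nf
  rw [tanh_eq, h, exp_neg]
  field_simp
  ring

theorem log_one_add_exp_neg_le (a b : ℝ) :
    log (1 + exp (-b)) ≤ log (1 + exp (-a)) + -1 / (1 + exp a) * (b - a)
      + 1 / 2 * (logCoshSlope (a / 2) / 2 * (b - a) ^ 2) := by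
  rw [log_one_add_exp_neg, log_one_add_exp_neg, neg_div, one_div_one_add_exp]
  have hslope := logCoshSlope_mul (a / 2)
  linear_combination log_cosh_le (a / 2) (b / 2) + (b - a) / 2 * hslope

lemma Hqu_eq {d : ℕ} (v x : Fin d → ℝ) :
    Hqu v x = (logCoshSlope ((x ⬝ᵥ v) / 2) / 2) • vecMulVec x x := by
  simp only [Hqu, logCoshSlope, div_eq_zero_iff, two_ne_zero, or_false]
  split_ifs <;> ring_nf

lemma dotProduct_vecMulVec_mulVec {d : ℕ} (x z : Fin d → ℝ) :
    z ⬝ᵥ vecMulVec x x *ᵥ z = (x ⬝ᵥ z) ^ 2 := by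
  simp [vecMulVec_mulVec, dotProduct_comm z x, sq]

/-- Global quadratic upper bound on the logistic loss
`f_LL(w,(x,y)) = log(1 + exp(−y⟨w,x⟩))`:
for all `v, x, w ∈ ℝ^d` and `y ∈ {−1,+1}`,
`f_LL(w) ≤ f_LL(v) + ⟨∇f_LL(v), w − v⟩ + (1/2)⟨H_qu(v)(w − v), w − v⟩`,
where `∇f_LL(v,(x,y)) = −yx/(1 + exp(y⟨v,x⟩))`. -/
theorem logistic_quadratic_upper_bound {d : ℕ} (v x w : Fin d → ℝ) (y : ℝ)
    (hy : y = 1 ∨ y = -1) :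
    Real.log (1 + Real.exp (-(y * (w ⬝ᵥ x)))) ≤
      Real.log (1 + Real.exp (-(y * (v ⬝ᵥ x))))
        + ((-y / (1 + Real.exp (y * (v ⬝ᵥ x)))) • x) ⬝ᵥ (w - v)
        + (1 / 2) * ((w - v) ⬝ᵥ (Hqu v x).mulVec (w - v)) := by
  have hsq : y * y = 1 := by rcases hy with rfl | rfl <;> norm_num
  have hdot : x ⬝ᵥ (w - v) = w ⬝ᵥ x - v ⬝ᵥ x := by
    rw [dotProduct_sub, dotProduct_comm x w, dotProduct_comm x v]
  have hgrad : ((-y / (1 + exp (y * (v ⬝ᵥ x)))) • x) ⬝ᵥ (w - v)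
      = -1 / (1 + exp (y * (v ⬝ᵥ x))) * (y * (w ⬝ᵥ x) - y * (v ⬝ᵥ x)) := by
    rw [smul_dotProduct, hdot, smul_eq_mul]
    ring
  have hslope : logCoshSlope ((x ⬝ᵥ v) / 2) = logCoshSlope (y * (v ⬝ᵥ x) / 2) := by
    rcases hy with rfl | rfl <;> simp [dotProduct_comm x v, neg_div, logCoshSlope_neg]
  have hquad : (w - v) ⬝ᵥ (Hqu v x) *ᵥ (w - v)
      = logCoshSlope (y * (v ⬝ᵥ x) / 2) / 2 * (y * (w ⬝ᵥ x) - y * (v ⬝ᵥ x)) ^ 2 := by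
    rw [Hqu_eq, smul_mulVec, dotProduct_smul, dotProduct_vecMulVec_mulVec, hdot, hslope,
      smul_eq_mul]
    linear_combination
      -logCoshSlope (y * (v ⬝ᵥ x) / 2) / 2 * (w ⬝ᵥ x - v ⬝ᵥ x) ^ 2 * hsq
  rw [hgrad, hquad]
  exact log_one_add_exp_neg_le (y * (v ⬝ᵥ x)) (y * (w ⬝ᵥ x))
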